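/- Two unrooted binary phylogenetic trees T1 and T2 on the same set of taxa X are topologically identical (isomorphic via a label-preserving isomorphism) if and only if they induce identical sets of quartets, i.e., for every 4-element subset {a,b,c,d} ⊆ X, T1 restricted to {a,b,c,d} equals T2 restricted to {a,b,c,d}. -/

import Mathlib

open SimpleGraph

/-- The degree of a vertex `v` in a graph `G`. -/
noncomputable def vdeg {V : Type} (G : SimpleGraph V) (v : V) : ℕ :=
  (G.neighborSet v).ncard

/-- The set of vertices lying on some path from `a` to `b` in `G`
(in a tree: the unique path). -/
def PathSet {V : Type} (G : SimpleGraph V) (a b : V) : Set V :=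
  {v | ∃ p : G.Walk a b, p.IsPath ∧ v ∈ p.support}

/-- An unrooted binary phylogenetic tree on the taxon set `X`: a tree whose
leaves are bijectively labeled by `X` and whose internal vertices have degree 3. -/
structure UBTree (X : Type) where
  n : ℕ
  G : SimpleGraph (Fin n)
  isTree : G.IsTree
  lab : X → Fin n
  lab_inj : Function.Injective lab
  leaf_iff : ∀ v : Fin n, v ∈ Set.range lab ↔ vdeg G v ≤ 1
  internal_deg : ∀ v : Fin n, v ∉ Set.range lab → vdeg G v = 3

def allDiff3 {α : Type} (a b c : α) : Prop := a ≠ b ∧ a ≠ c ∧ b ≠ c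

def allDiff4 {α : Type} (a b c d : α) : Prop :=
  a ≠ b ∧ a ≠ c ∧ a ≠ d ∧ b ≠ c ∧ b ≠ d ∧ c ≠ d

/-- `T` displays the quartet `ab|cd` iff the path between the leaves labeled `a,b`
is vertex-disjoint from the path between the leaves labeled `c,d`. -/
def UBTree.Quartet {X : Type} (T : UBTree X) (a b c d : X) : Prop :=
  Disjoint (PathSet T.G (T.lab a) (T.lab b)) (PathSet T.G (T.lab c) (T.lab d))

/-- The minimal connecting subtree of the taxa in `B`: all vertices lying on a path
between two leaves labeled by elements of `B`. -/
def UBTree.span {X : Type} (T : UBTree X) (B : Set X) : Set (Fin T.n) :=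
  ⋃ a ∈ B, ⋃ b ∈ B, PathSet T.G (T.lab a) (T.lab b)

/-- A label-preserving isomorphism between two trees on the same taxon set. -/
def UBTree.Iso {X : Type} (T1 T2 : UBTree X) : Prop :=
  ∃ φ : T1.G ≃g T2.G, ∀ x : X, φ (T1.lab x) = T2.lab x

/-!
In a tree, `x` lies on the path from `a` to `b` exactly when `d(a, x) + d(x, b) = d(a, b)`, which
turns path arguments into arithmetic on distances.

Record each vertex `v` of a binary phylogenetic tree by the set of pairs of taxa whose path passes
through `v`. Leaves can be found behind any vertex in two prescribed directions; hence every vertex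
is the median of three taxa, so the record is injective, and the records determine which vertices
lie between which. When two trees display the same quartets, the median `v` of three distinct taxa
`x, y, z` in one tree and their median `u` in the other have the same record: a taxon `a` lies in
the branch at `v` containing `x` iff `a = x` or `ax|yz` is displayed, and as `v` has degree three,
`v` separates two taxa iff they lie in different branches. Matching vertices with equal records is
then a bijection that preserves betweenness, hence adjacency.
-/

namespace SimpleGraph

variable {V : Type} {G : SimpleGraph V}

def Between (G : SimpleGraph V) (a x b : V) : Prop :=
  G.dist a x + G.dist x b = G.dist a b

def IsMedian (G : SimpleGraph V) (m a b c : V) : Prop :=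
  G.Between a m b ∧ G.Between a m c ∧ G.Between b m c

theorem Between.symm {a x b : V} (h : G.Between a x b) : G.Between b x a := by
  unfold Between at *
  rw [dist_comm, add_comm, dist_comm (u := x), h, dist_comm]

theorem between_self_left (G : SimpleGraph V) (a b : V) : G.Between a a b := by
  simp [Between]

theorem between_self_right (G : SimpleGraph V) (a b : V) : G.Between a b b := by
  simp [Between]

namespace Between

variable {a b c d : V}

theorem trans_right_left (hG : G.Connected) (h₁ : G.Between a b d) (h₂ : G.Between b c d) :
    G.Between a b c := by
  unfold Between at *
  have := hG.dist_triangle (u := a) (v := c) (w := d)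
  have := hG.dist_triangle (u := a) (v := b) (w := c)
  omega

theorem trans_right (hG : G.Connected) (h₁ : G.Between a b d) (h₂ : G.Between b c d) :
    G.Between a c d := by
  unfold Between at *
  have := hG.dist_triangle (u := a) (v := c) (w := d)
  have := hG.dist_triangle (u := a) (v := b) (w := c)
  omega

theorem trans_left (hG : G.Connected) (h₁ : G.Between a c d) (h₂ : G.Between a b c) :
    G.Between a b d :=
  (h₁.symm.trans_right hG h₂.symm).symm

theorem trans_left_right (hG : G.Connected) (h₁ : G.Between a c d) (h₂ : G.Between a b c) :
    G.Between b c d :=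
  (h₁.symm.trans_right_left hG h₂.symm).symm

end Between

namespace IsMedian

variable {m a b c : V}

theorem swap (h : G.IsMedian m a b c) : G.IsMedian m b a c :=
  ⟨h.1.symm, h.2.2, h.2.1⟩

theorem rotate (h : G.IsMedian m a b c) : G.IsMedian m b c a :=
  ⟨h.2.2, h.1.symm, h.2.1.symm⟩

end IsMedian

theorem eq_of_adj_of_vdeg_le_one [Finite V] {v s s' : V} (h : vdeg G v ≤ 1) (hs : G.Adj v s)
    (hs' : G.Adj v s') : s = s' :=
  (Set.ncard_le_one (Set.toFinite _)).mp h s hs s' hs'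

namespace Connected

variable (hG : G.Connected)
include hG

theorem eq_of_between_self {a x : V} (h : G.Between a x a) : x = a := by
  unfold Between at h
  rw [dist_self, Nat.add_eq_zero_iff] at h
  exact hG.dist_eq_zero_iff.mp h.2

theorem exists_adj_between {u v : V} (h : u ≠ v) : ∃ s, G.Adj u s ∧ G.Between u s v := by
  obtain ⟨p, hp⟩ := hG.exists_walk_length_eq_dist u v
  cases p with
  | nil => exact absurd rfl h
  | @cons _ s _ hs q =>
    refine ⟨s, hs, ?_⟩
    have := dist_le q
    have := hG.dist_triangle (u := u) (v := s) (w := v)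
    rw [Walk.length_cons] at hp
    unfold Between
    rw [dist_eq_one_iff_adj.mpr hs] at *
    omega

theorem adj_iff_forall_between {u v : V} :
    G.Adj u v ↔ u ≠ v ∧ ∀ t, G.Between u t v → t = u ∨ t = v := by
  refine ⟨fun h => ⟨h.ne, fun t ht => ?_⟩, fun ⟨hne, h⟩ => ?_⟩
  · unfold Between at ht
    rw [dist_eq_one_iff_adj.mpr h, Nat.add_eq_one_iff] at ht
    rcases ht with ⟨ht, -⟩ | ⟨-, ht⟩
    · exact .inl (hG.dist_eq_zero_iff.mp ht).symm
    · exact .inr (hG.dist_eq_zero_iff.mp ht)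
  · obtain ⟨s, hs, hsv⟩ := hG.exists_adj_between hne
    rcases h s hsv with rfl | rfl
    · exact (G.irrefl hs).elim
    · exact hs

theorem adj_iff_of_between_iff {W : Type} {H : SimpleGraph W} (hH : H.Connected) (e : V ≃ W)
    (he : ∀ u t v, H.Between (e u) (e t) (e v) ↔ G.Between u t v) (u v : V) :
    H.Adj (e u) (e v) ↔ G.Adj u v := by
  rw [hG.adj_iff_forall_between, hH.adj_iff_forall_between, e.injective.ne_iff,
    ← e.forall_congr_right]
  simp only [he, e.injective.eq_iff]

theorem not_between_of_adj {v s p q : V} (hs : G.Adj v s) (hp : G.Between v s p)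
    (hq : G.Between v s q) : ¬ G.Between p v q := by
  unfold Between at *
  have := hG.dist_triangle (u := p) (v := s) (w := q)
  have := G.dist_comm (u := p) (v := s)
  have := G.dist_comm (u := p) (v := v)
  rw [dist_eq_one_iff_adj.mpr hs] at hp hq
  omega

theorem eq_or_eq_of_between_of_vdeg_le_one [Finite V] {a b l : V} (hl : vdeg G l ≤ 1)
    (h : G.Between a l b) : l = a ∨ l = b := by
  by_contra! hne
  obtain ⟨s, hs, hsa⟩ := hG.exists_adj_between hne.1
  obtain ⟨s', hs', hsb⟩ := hG.exists_adj_between hne.2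
  rw [eq_of_adj_of_vdeg_le_one hl hs' hs] at hsb
  exact hG.not_between_of_adj hs hsa hsb h

/-- The first steps from `v` towards `a, x, y, z` would be four distinct neighbours of `v`. -/
theorem not_between_or_of_isMedian [Finite V] {v x y z a : V} (h : G.IsMedian v x y z)
    (hv : vdeg G v ≤ 3) (hx : v ≠ x) (hy : v ≠ y) (hz : v ≠ z) (ha : v ≠ a) :
    ¬ G.Between a v x ∨ ¬ G.Between a v y ∨ ¬ G.Between a v z := by
  by_contra! hax
  obtain ⟨sa, hsa, hsa'⟩ := hG.exists_adj_between ha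
  obtain ⟨sx, hsx, hsx'⟩ := hG.exists_adj_between hx
  obtain ⟨sy, hsy, hsy'⟩ := hG.exists_adj_between hy
  obtain ⟨sz, hsz, hsz'⟩ := hG.exists_adj_between hz
  have ne : ∀ {s s' p q}, G.Adj v s → G.Between v s p → G.Between v s' q → G.Between p v q →
      s ≠ s' := by
    rintro s s' p q hs hsp hsq hpq rfl
    exact hG.not_between_of_adj hs hsp hsq hpq
  have hsub : ({sa, sx, sy, sz} : Set V) ⊆ G.neighborSet v := by
    simp [Set.insert_subset_iff, hsa, hsx, hsy, hsz]
  have hcard := (Set.ncard_le_ncard hsub (Set.toFinite _)).trans hv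
  rw [Set.ncard_insert_of_notMem, Set.ncard_insert_of_notMem, Set.ncard_pair] at hcard
  · omega
  · exact ne hsy hsy' hsz' h.2.2
  · simp only [Set.mem_insert_iff, Set.mem_singleton_iff, not_or]
    exact ⟨ne hsx hsx' hsy' h.1, ne hsx hsx' hsz' h.2.1⟩
  · simp only [Set.mem_insert_iff, Set.mem_singleton_iff, not_or]
    exact ⟨ne hsa hsa' hsx' hax.1, ne hsa hsa' hsy' hax.2.1, ne hsa hsa' hsz' hax.2.2⟩

end Connected

namespace IsTree

variable (hT : G.IsTree)
include hT

theorem length_eq_dist_of_isPath {u v : V} {p : G.Walk u v} (hp : p.IsPath) :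
    p.length = G.dist u v := by
  obtain ⟨q, hq, hlen⟩ := hT.connected.exists_path_of_dist u v
  rw [(hT.existsUnique_path u v).unique hp hq, hlen]

theorem mem_pathSet_iff_between {a x b : V} : x ∈ PathSet G a b ↔ G.Between a x b := by
  classical
  constructor
  · rintro ⟨p, hp, hx⟩
    have := congrArg Walk.length (p.take_spec hx)
    rwa [Walk.length_append, hT.length_eq_dist_of_isPath (hp.takeUntil hx),
      hT.length_eq_dist_of_isPath (hp.dropUntil hx), hT.length_eq_dist_of_isPath hp] at this
  · intro h
    obtain ⟨p, -, hp⟩ := hT.connected.exists_path_of_dist a x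
    obtain ⟨q, -, hq⟩ := hT.connected.exists_path_of_dist x b
    refine ⟨p.append q, (p.append q).isPath_of_length_eq_dist ?_, ?_⟩
    · rwa [Walk.length_append, hp, hq]
    · simp

theorem between_or_between_of_between {a b x y : V} (hx : G.Between a x b)
    (hy : G.Between a y b) : G.Between a y x ∨ G.Between x y b := by
  classical
  obtain ⟨p, hp, hxp⟩ := hT.mem_pathSet_iff_between.mpr hx
  obtain ⟨q, hq, hyq⟩ := hT.mem_pathSet_iff_between.mpr hy
  rw [(hT.existsUnique_path a b).unique hq hp, ← p.take_spec hxp,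
    Walk.mem_support_append_iff] at hyq
  exact hyq.imp (fun h => hT.mem_pathSet_iff_between.mp ⟨_, hp.takeUntil hxp, h⟩)
    (fun h => hT.mem_pathSet_iff_between.mp ⟨_, hp.dropUntil hxp, h⟩)

theorem eq_of_between_of_dist_eq {a b x y : V} (hx : G.Between a x b) (hy : G.Between a y b)
    (h : G.dist a x = G.dist a y) : x = y := by
  rcases hT.between_or_between_of_between hx hy with h' | h' <;> unfold Between at *
  · exact (hT.connected.dist_eq_zero_iff.mp (by omega)).symm
  · exact hT.connected.dist_eq_zero_iff.mp (by omega)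

theorem between_or_between {a b x : V} (h : G.Between a x b) (t : V) :
    G.Between a x t ∨ G.Between t x b := by
  classical
  obtain ⟨p, hp, -⟩ := hT.connected.exists_path_of_dist a t
  obtain ⟨q, hq, -⟩ := hT.connected.exists_path_of_dist t b
  obtain ⟨r, hr, hxr⟩ := hT.mem_pathSet_iff_between.mpr h
  rw [(hT.existsUnique_path a b).unique hr (p.append q).bypass_isPath] at hxr
  exact ((Walk.mem_support_append_iff p q).mp (Walk.support_bypass_subset_support _ hxr)).imp
    (fun h => hT.mem_pathSet_iff_between.mp ⟨p, hp, h⟩)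
    (fun h => hT.mem_pathSet_iff_between.mp ⟨q, hq, h⟩)

theorem between_or_between_of_adj {x y : V} (h : G.Adj x y) (p : V) :
    G.Between p x y ∨ G.Between p y x := by
  unfold Between
  rw [dist_eq_one_iff_adj.mpr h, dist_eq_one_iff_adj.mpr h.symm]
  have := hT.dist_eq_dist_add_one_of_adj p h
  omega

/-- The median is a point of the path from `a` to `b` that lies between `a` and `c`, taken as
close to `b` as possible. -/
theorem exists_isMedian (a b c : V) : ∃ m, G.IsMedian m a b c := by
  have hG := hT.connected
  obtain ⟨m, ⟨hab, hac⟩, hmin⟩ := (InvImage.wf (G.dist · b) wellFounded_lt).has_min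
    {m | G.Between a m b ∧ G.Between a m c}
    ⟨a, G.between_self_left a b, G.between_self_left a c⟩
  refine ⟨m, hab, hac, ?_⟩
  by_contra hmc
  obtain ⟨s, hs, hsb⟩ :=
    hG.exists_adj_between fun hmb : m = b => hmc (hmb ▸ G.between_self_left b c)
  have has := hab.trans_right hG hsb
  have hcloser : G.dist s b < G.dist m b := by
    have := hsb
    unfold Between at this
    rw [dist_eq_one_iff_adj.mpr hs] at this
    omega
  rcases hT.between_or_between has c with hsc | hcs
  · exact hmin s ⟨has, hsc⟩ hcloser
  rcases hT.between_or_between_of_adj hs c with hcm | hcs'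
  · exact hmc (hcs.trans_left hG hcm).symm
  · exact hmin s ⟨has, hac.trans_right hG hcs'.symm⟩ hcloser

theorem between_of_between_of_between {a b u v t : V} (ht : G.Between u t v)
    (hu : G.Between a u b) (hv : G.Between a v b) : G.Between a t b := by
  have hG := hT.connected
  rcases hT.between_or_between_of_between hu hv with havu | huvb
  · exact hv.trans_right hG ((hu.trans_left_right hG havu).trans_left hG ht.symm)
  · exact hu.trans_right hG (huvb.trans_left hG ht)

theorem between_of_not_between {a b u p q : V} (ha : ¬ G.Between a u p)
    (hb : ¬ G.Between b u q) (h : G.Between p u q) : G.Between a u b := by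
  rcases hT.between_or_between h a with hpa | haq
  · exact absurd hpa.symm ha
  rcases hT.between_or_between haq b with hab | hbq
  · exact hab
  · exact absurd hbq hb

theorem not_between_of_not_between {a b u p : V} (ha : ¬ G.Between a u p)
    (hb : ¬ G.Between b u p) : ¬ G.Between a u b := fun h =>
  (hT.between_or_between h p).elim ha fun hpb => hb hpb.symm

theorem exists_adj_not_between [Finite V] {v : V} (hv : 3 ≤ vdeg G v) (p q : V) :
    ∃ y, G.Adj v y ∧ ¬ G.Between v y p ∧ ¬ G.Between v y q := by
  have toward : ∀ p, {y | G.Adj v y ∧ G.Between v y p}.ncard ≤ 1 := fun p =>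
    (Set.ncard_le_one (Set.toFinite _)).mpr fun y ⟨hy, hyp⟩ y' ⟨hy', hy'p⟩ =>
      hT.eq_of_between_of_dist_eq hyp hy'p (by
        rw [dist_eq_one_iff_adj.mpr hy, dist_eq_one_iff_adj.mpr hy'])
  by_contra! h
  have hsub : G.neighborSet v ⊆
      {y | G.Adj v y ∧ G.Between v y p} ∪ {y | G.Adj v y ∧ G.Between v y q} := fun y hy => by
    by_cases hyp : G.Between v y p
    · exact .inl ⟨hy, hyp⟩
    · exact .inr ⟨hy, h y hy hyp⟩
  have := (Set.ncard_le_ncard hsub (Set.toFinite _)).trans (Set.ncard_union_le _ _)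
  have := toward p
  have := toward q
  unfold vdeg at hv
  omega

/-- A vertex `l` as far from `u` as possible with `u` between `l` and both `p` and `q` has degree
at most one: a neighbour of `l` pointing neither towards `p` nor towards `q` would be farther. -/
theorem exists_vdeg_le_one_between [Finite V] (hdeg : ∀ v, vdeg G v ≤ 1 ∨ 3 ≤ vdeg G v)
    (u p q : V) : ∃ l, vdeg G l ≤ 1 ∧ G.Between l u p ∧ G.Between l u q := by
  have hG := hT.connected
  obtain ⟨l, ⟨hp, hq⟩, hmax⟩ := Set.exists_max_image
    {l | G.Between l u p ∧ G.Between l u q} (G.dist · u) (Set.toFinite _)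
    ⟨u, G.between_self_left u p, G.between_self_left u q⟩
  refine ⟨l, (hdeg l).resolve_right fun h3 => ?_, hp, hq⟩
  obtain ⟨y, hy, hyp, hyq⟩ := hT.exists_adj_not_between h3 p q
  have hylp := ((hT.between_or_between_of_adj hy p).resolve_right fun h => hyp h.symm).symm
  have hylq := ((hT.between_or_between_of_adj hy q).resolve_right fun h => hyq h.symm).symm
  have hfar := hmax y ⟨hylp.trans_right hG hp, hylq.trans_right hG hq⟩
  have hylu := hylp.trans_right_left hG hp
  unfold Between at hylu
  rw [dist_comm, dist_eq_one_iff_adj.mpr hy] at hylu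
  omega

end IsTree

namespace IsMedian

variable {m a b c : V}

theorem eq (hT : G.IsTree) {m' : V} (h : G.IsMedian m a b c) (h' : G.IsMedian m' a b c) :
    m = m' := by
  refine hT.eq_of_between_of_dist_eq h.1 h'.1 ?_
  obtain ⟨h₁, h₂, h₃⟩ := h
  obtain ⟨h₁', h₂', h₃'⟩ := h'
  unfold Between at *
  rw [dist_comm (u := b) (v := m)] at h₃
  rw [dist_comm (u := b) (v := m')] at h₃'
  omega

theorem between_of_between (hT : G.IsTree) {t : V} (h : G.IsMedian m a b c)
    (ht : G.Between a t b) : G.Between t m c := by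
  rcases hT.between_or_between_of_between h.1 ht with hatm | hmtb
  · exact h.2.1.trans_left_right hT.connected hatm
  · exact h.2.2.trans_left_right hT.connected hmtb.symm

end IsMedian

theorem Iso.apply_mem_pathSet {W : Type} {H : SimpleGraph W} (ψ : G ≃g H) {u v t : V}
    (h : t ∈ PathSet G u v) : ψ t ∈ PathSet H (ψ u) (ψ v) := by
  obtain ⟨p, hp, ht⟩ := h
  refine ⟨p.map ψ.toHom, hp.map ψ.injective, ?_⟩
  rw [Walk.support_map]
  exact List.mem_map_of_mem ht

theorem Iso.pathSet_eq_image {W : Type} {H : SimpleGraph W} (ψ : G ≃g H) (u v : V) :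
    PathSet H (ψ u) (ψ v) = ψ '' PathSet G u v := by
  refine Set.ext fun t => ⟨fun h => ⟨ψ.symm t, ?_, ψ.apply_symm_apply t⟩, ?_⟩
  · simpa using Iso.apply_mem_pathSet ψ.symm h
  · rintro ⟨s, hs, rfl⟩
    exact Iso.apply_mem_pathSet ψ hs

end SimpleGraph

namespace UBTree

variable {X : Type}

def pathsThrough (T : UBTree X) (v : Fin T.n) : Set (X × X) :=
  {e | T.G.Between (T.lab e.1) v (T.lab e.2)}

def SameQuartets (T₁ T₂ : UBTree X) : Prop :=
  ∀ a b c d : X, allDiff4 a b c d → (T₁.Quartet a b c d ↔ T₂.Quartet a b c d)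

variable (T : UBTree X)

theorem vdeg_le_one_or_three_le (v : Fin T.n) : vdeg T.G v ≤ 1 ∨ 3 ≤ vdeg T.G v := by
  by_cases hv : v ∈ Set.range T.lab
  · exact .inl ((T.leaf_iff v).mp hv)
  · exact .inr (T.internal_deg v hv).ge

theorem exists_lab_between (u p q : Fin T.n) :
    ∃ x, T.G.Between (T.lab x) u p ∧ T.G.Between (T.lab x) u q := by
  obtain ⟨l, hl, hp, hq⟩ := T.isTree.exists_vdeg_le_one_between T.vdeg_le_one_or_three_le u p q
  obtain ⟨x, rfl⟩ := (T.leaf_iff l).mpr hl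
  exact ⟨x, hp, hq⟩

theorem exists_isMedian_lab (v : Fin T.n) :
    ∃ x y z, T.G.IsMedian v (T.lab x) (T.lab y) (T.lab z) := by
  obtain ⟨x, -⟩ := T.exists_lab_between v v v
  obtain ⟨y, hy, -⟩ := T.exists_lab_between v (T.lab x) (T.lab x)
  obtain ⟨z, hzx, hzy⟩ := T.exists_lab_between v (T.lab x) (T.lab y)
  exact ⟨x, y, z, hy.symm, hzx.symm, hzy.symm⟩

theorem eq_or_eq_of_between_lab {a b c : X} (h : T.G.Between (T.lab a) (T.lab c) (T.lab b)) :
    c = a ∨ c = b :=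
  (T.isTree.connected.eq_or_eq_of_between_of_vdeg_le_one ((T.leaf_iff _).mp ⟨c, rfl⟩) h).imp
    (fun h => T.lab_inj h) (fun h => T.lab_inj h)

theorem ne_of_between_of_notMem_range {v : Fin T.n} (hv : v ∉ Set.range T.lab) {a b : X}
    (h : T.G.Between (T.lab a) v (T.lab b)) : a ≠ b := by
  rintro rfl
  exact hv ⟨a, (T.isTree.connected.eq_of_between_self h).symm⟩

theorem notMem_range_of_isMedian {v : Fin T.n} {x y z : X} (hd : allDiff3 x y z)
    (h : T.G.IsMedian v (T.lab x) (T.lab y) (T.lab z)) : v ∉ Set.range T.lab := by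
  obtain ⟨hxy, hxz, hyz⟩ := hd
  rintro ⟨c, rfl⟩
  rcases T.eq_or_eq_of_between_lab h.1 with rfl | rfl
  · exact (T.eq_or_eq_of_between_lab h.2.2).elim hxy hxz
  · exact (T.eq_or_eq_of_between_lab h.2.1).elim (fun h => hxy h.symm) hyz

theorem exists_isMedian_of_notMem_range {v : Fin T.n} (hv : v ∉ Set.range T.lab) :
    ∃ x y z, allDiff3 x y z ∧ T.G.IsMedian v (T.lab x) (T.lab y) (T.lab z) := by
  obtain ⟨x, y, z, h⟩ := T.exists_isMedian_lab v
  exact ⟨x, y, z, ⟨T.ne_of_between_of_notMem_range hv h.1,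
    T.ne_of_between_of_notMem_range hv h.2.1, T.ne_of_between_of_notMem_range hv h.2.2⟩, h⟩

theorem quartet_of_not_between {v : Fin T.n} {a p r s : X}
    (h : T.G.IsMedian v (T.lab p) (T.lab r) (T.lab s))
    (ha : ¬ T.G.Between (T.lab a) v (T.lab p)) : T.Quartet a p r s := by
  refine Set.disjoint_left.mpr fun t hap hrs => ha ?_
  rw [T.isTree.mem_pathSet_iff_between] at hap hrs
  exact hap.trans_right T.isTree.connected (h.rotate.between_of_between T.isTree hrs)

theorem not_between_of_quartet {u : Fin T.n} {a p r s : X} (hq : T.Quartet a p r s)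
    (hu : T.G.Between (T.lab r) u (T.lab s)) : ¬ T.G.Between (T.lab a) u (T.lab p) := fun h =>
  Set.disjoint_left.mp hq (T.isTree.mem_pathSet_iff_between.mpr h)
    (T.isTree.mem_pathSet_iff_between.mpr hu)

theorem pathsThrough_injective : Function.Injective T.pathsThrough := by
  intro v w h
  obtain ⟨x, y, z, hv⟩ := T.exists_isMedian_lab v
  have hmem : ∀ {a b}, T.G.Between (T.lab a) v (T.lab b) → T.G.Between (T.lab a) w (T.lab b) :=
    fun {a b} hab => show (a, b) ∈ T.pathsThrough w from h ▸ hab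
  exact hv.eq T.isTree ⟨hmem hv.1, hmem hv.2.1, hmem hv.2.2⟩

theorem pathsThrough_lab (c : X) : T.pathsThrough (T.lab c) = {e | e.1 = c ∨ e.2 = c} := by
  ext ⟨a, b⟩
  refine ⟨fun h => (T.eq_or_eq_of_between_lab h).imp Eq.symm Eq.symm, ?_⟩
  rintro (rfl | rfl)
  exacts [T.G.between_self_left _ _, T.G.between_self_right _ _]

theorem between_iff_pathsThrough {u t v : Fin T.n} :
    T.G.Between u t v ↔ T.pathsThrough u ∩ T.pathsThrough v ⊆ T.pathsThrough t := by
  have hG := T.isTree.connected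
  refine ⟨fun h e ⟨hu, hv⟩ => T.isTree.between_of_between_of_between h hu hv, fun h => ?_⟩
  obtain ⟨a, hau, hat⟩ := T.exists_lab_between u v t
  obtain ⟨b, hbv, hbt⟩ := T.exists_lab_between v (T.lab a) t
  have hab : T.G.Between (T.lab a) t (T.lab b) :=
    @h (a, b) ⟨hbv.symm.trans_left hG hau, hbv.symm⟩
  exact (hab.trans_left_right hG hat).trans_right_left hG hbt.symm

variable {T₁ T₂ : UBTree X}

theorem Iso.sameQuartets (h : T₁.Iso T₂) : SameQuartets T₁ T₂ := by
  obtain ⟨φ, hφ⟩ := h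
  intro a b c d _
  simp only [UBTree.Quartet, ← hφ, Iso.pathSet_eq_image, Set.disjoint_image_iff φ.injective]

namespace SameQuartets

variable (hQ : SameQuartets T₁ T₂)
include hQ

theorem symm : SameQuartets T₂ T₁ := fun a b c d h => (hQ a b c d h).symm

/-- Unless `a = p`, both the hypothesis and the conclusion say that `ap|rs` is displayed. -/
theorem not_between {v : Fin T₁.n} {u : Fin T₂.n} (hv : v ∉ Set.range T₁.lab)
    (hu : u ∉ Set.range T₂.lab) {a p r s : X}
    (h₁ : T₁.G.IsMedian v (T₁.lab p) (T₁.lab r) (T₁.lab s))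
    (h₂ : T₂.G.Between (T₂.lab r) u (T₂.lab s))
    (ha : ¬ T₁.G.Between (T₁.lab a) v (T₁.lab p)) : ¬ T₂.G.Between (T₂.lab a) u (T₂.lab p) := by
  by_cases hap : a = p
  · subst hap
    exact fun h => hu ⟨a, (T₂.isTree.connected.eq_of_between_self h).symm⟩
  have hd : allDiff4 a p r s := ⟨hap, by rintro rfl; exact ha h₁.1.symm,
    by rintro rfl; exact ha h₁.2.1.symm, T₁.ne_of_between_of_notMem_range hv h₁.1,
    T₁.ne_of_between_of_notMem_range hv h₁.2.1, T₁.ne_of_between_of_notMem_range hv h₁.2.2⟩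
  exact T₂.not_between_of_quartet ((hQ a p r s hd).mp (T₁.quartet_of_not_between h₁ ha)) h₂

theorem between_of_not_between {v : Fin T₁.n} {u : Fin T₂.n} (hv : v ∉ Set.range T₁.lab)
    (hu : u ∉ Set.range T₂.lab) {p q r a b : X}
    (h₁ : T₁.G.IsMedian v (T₁.lab p) (T₁.lab q) (T₁.lab r))
    (h₂ : T₂.G.IsMedian u (T₂.lab p) (T₂.lab q) (T₂.lab r))
    (ha : ¬ T₁.G.Between (T₁.lab a) v (T₁.lab p))
    (hb : ¬ T₁.G.Between (T₁.lab b) v (T₁.lab q)) : T₂.G.Between (T₂.lab a) u (T₂.lab b) :=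
  T₂.isTree.between_of_not_between (hQ.not_between hv hu h₁ h₂.2.2 ha)
    (hQ.not_between hv hu h₁.swap h₂.2.1 hb) h₂.1

/-- Each of `a` and `b` lies in the branch at `v` of one of `x, y, z`, and these branches differ
because `v` separates `a` from `b`. -/
theorem between {v : Fin T₁.n} {u : Fin T₂.n} {x y z a b : X} (hd : allDiff3 x y z)
    (h₁ : T₁.G.IsMedian v (T₁.lab x) (T₁.lab y) (T₁.lab z))
    (h₂ : T₂.G.IsMedian u (T₂.lab x) (T₂.lab y) (T₂.lab z))
    (h : T₁.G.Between (T₁.lab a) v (T₁.lab b)) : T₂.G.Between (T₂.lab a) u (T₂.lab b) := by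
  have hv := T₁.notMem_range_of_isMedian hd h₁
  have hu := T₂.notMem_range_of_isMedian hd h₂
  have branch : ∀ w : X, ¬ T₁.G.Between (T₁.lab w) v (T₁.lab x) ∨
      ¬ T₁.G.Between (T₁.lab w) v (T₁.lab y) ∨ ¬ T₁.G.Between (T₁.lab w) v (T₁.lab z) :=
    fun w => T₁.isTree.connected.not_between_or_of_isMedian h₁ (T₁.internal_deg v hv).le
      (fun h => hv ⟨x, h.symm⟩) (fun h => hv ⟨y, h.symm⟩) (fun h => hv ⟨z, h.symm⟩)
      (fun h => hv ⟨w, h.symm⟩)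
  rcases branch a with ha | ha | ha <;> rcases branch b with hb | hb | hb
  · exact absurd h (T₁.isTree.not_between_of_not_between ha hb)
  · exact hQ.between_of_not_between hv hu h₁ h₂ ha hb
  · exact hQ.between_of_not_between hv hu h₁.swap.rotate h₂.swap.rotate ha hb
  · exact hQ.between_of_not_between hv hu h₁.swap h₂.swap ha hb
  · exact absurd h (T₁.isTree.not_between_of_not_between ha hb)
  · exact hQ.between_of_not_between hv hu h₁.rotate h₂.rotate ha hb
  · exact hQ.between_of_not_between hv hu h₁.rotate.rotate h₂.rotate.rotate ha hb
  · exact hQ.between_of_not_between hv hu h₁.rotate.swap h₂.rotate.swap ha hb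
  · exact absurd h (T₁.isTree.not_between_of_not_between ha hb)

theorem exists_pathsThrough_eq (v : Fin T₁.n) : ∃ u, T₂.pathsThrough u = T₁.pathsThrough v := by
  by_cases hv : v ∈ Set.range T₁.lab
  · obtain ⟨c, rfl⟩ := hv
    exact ⟨T₂.lab c, by rw [pathsThrough_lab, pathsThrough_lab]⟩
  obtain ⟨x, y, z, hd, h₁⟩ := T₁.exists_isMedian_of_notMem_range hv
  obtain ⟨u, h₂⟩ := T₂.isTree.exists_isMedian (T₂.lab x) (T₂.lab y) (T₂.lab z)
  exact ⟨u, Set.ext fun e => ⟨hQ.symm.between hd h₂ h₁, hQ.between hd h₁ h₂⟩⟩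

theorem range_pathsThrough : Set.range T₁.pathsThrough = Set.range T₂.pathsThrough := by
  refine Set.Subset.antisymm ?_ ?_ <;> rintro _ ⟨v, rfl⟩
  · exact hQ.exists_pathsThrough_eq v
  · exact hQ.symm.exists_pathsThrough_eq v

noncomputable def vertexEquiv : Fin T₁.n ≃ Fin T₂.n :=
  (Equiv.ofInjective _ T₁.pathsThrough_injective).trans <|
    (Equiv.setCongr hQ.range_pathsThrough).trans
      (Equiv.ofInjective _ T₂.pathsThrough_injective).symm

theorem pathsThrough_vertexEquiv (v : Fin T₁.n) :
    T₂.pathsThrough (hQ.vertexEquiv v) = T₁.pathsThrough v := by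
  simp [vertexEquiv, Equiv.apply_ofInjective_symm]

theorem iso : T₁.Iso T₂ := by
  have hbetween : ∀ u t v, T₂.G.Between (hQ.vertexEquiv u) (hQ.vertexEquiv t)
      (hQ.vertexEquiv v) ↔ T₁.G.Between u t v := by
    simp only [between_iff_pathsThrough, pathsThrough_vertexEquiv, implies_true]
  refine ⟨⟨hQ.vertexEquiv, T₁.isTree.connected.adj_iff_of_between_iff T₂.isTree.connected
    _ hbetween _ _⟩, fun x => T₂.pathsThrough_injective ?_⟩
  simp [pathsThrough_vertexEquiv, pathsThrough_lab]

end SameQuartets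

end UBTree

/-- Buneman: two unrooted binary phylogenetic trees on the same
taxon set are topologically identical (label-preservingly isomorphic) if and only
if they induce identical sets of quartets, i.e. for all four distinct taxa
`a, b, c, d`, `T1` displays the quartet `ab|cd` iff `T2` does (ranging over all
orderings, this says the restrictions of `T1` and `T2` to every 4-element subset
coincide). -/
theorem iso_iff_same_quartets {X : Type} (T1 T2 : UBTree X) :
    UBTree.Iso T1 T2 ↔
      ∀ a b c d : X, allDiff4 a b c d →
        (T1.Quartet a b c d ↔ T2.Quartet a b c d) :=
  ⟨UBTree.Iso.sameQuartets, UBTree.SameQuartets.iso⟩
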